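/- arXiv:1401.3251 — 2 statements merged into one kernel-verified Lean document; each statement's English description precedes it below -/
import Mathlib

section
/- For any graph G on n vertices, φ(G) ≤ n - χ(G). -/
open SimpleGraph

noncomputable def chi {W : Type*} (G : SimpleGraph W) : ℕ := G.chromaticNumber.toNat

def IsProper {W : Type*} (G : SimpleGraph W) (c : W → ℕ) : Prop :=
  ∀ ⦃u v⦄, G.Adj u v → c u ≠ c v

noncomputable def disc {W : Type*} (G : SimpleGraph W) (c : W → ℕ) (s : Finset W) : ℕ :=
  (s.image c).card - chi (G.induce (s : Set W))

noncomputable def phiC {W : Type*} [Fintype W] (G : SimpleGraph W) (c : W → ℕ) : ℕ :=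
  Finset.univ.sup (disc G c)

noncomputable def phi {W : Type*} [Fintype W] (G : SimpleGraph W) : ℕ :=
  sInf {n | ∃ c, IsProper G c ∧ phiC G c = n}

open Classical in
noncomputable def phiHatC {W : Type*} [Fintype W] (G : SimpleGraph W) (c : W → ℕ) : ℕ :=
  Finset.univ.sup (fun s : Finset W =>
    if (G.induce (s : Set W)).Connected then disc G c s else 0)

noncomputable def phiHat {W : Type*} [Fintype W] (G : SimpleGraph W) : ℕ :=
  sInf {n | ∃ c, IsProper G c ∧ phiHatC G c = n}

open Classical in
noncomputable def indepNum' {W : Type*} [Fintype W] (G : SimpleGraph W) : ℕ :=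
  Finset.univ.sup fun s : Finset W =>
    if ∀ u ∈ s, ∀ v ∈ s, ¬ G.Adj u v then s.card else 0

open Classical in
noncomputable def cliqueNum' {W : Type*} [Fintype W] (G : SimpleGraph W) : ℕ :=
  Finset.univ.sup fun s : Finset W =>
    if G.IsClique (s : Set W) then s.card else 0

/-! An injective colouring is proper and never reuses a colour, so for it the
discrepancy of an induced subgraph `G[S]` is `|S| - χ(G[S])`. Colouring `G[S]` optimally and
giving each vertex outside `S` a fresh colour shows `χ(G) ≤ χ(G[S]) + (n - |S|)`, hence
`|S| - χ(G[S]) ≤ n - χ(G)`. -/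

namespace SimpleGraph

variable {V : Type*} {G : SimpleGraph V}

def Coloring.extendByCompl {α : Type*} {s : Set V} [DecidablePred (· ∈ s)]
    (C : (G.induce s).Coloring α) : G.Coloring (α ⊕ ↥sᶜ) :=
  Coloring.mk
    (fun v => if h : v ∈ s then .inl (C ⟨v, h⟩) else .inr ⟨v, h⟩)
    (by
      intro u v huv
      by_cases hu : u ∈ s <;> by_cases hv : v ∈ s <;> simp only [hu, hv, dite_true, dite_false]
      · exact fun h =>
          C.valid (show (G.induce s).Adj ⟨u, hu⟩ ⟨v, hv⟩ from huv) (Sum.inl_injective h)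
      · exact Sum.inl_ne_inr
      · exact Sum.inr_ne_inl
      · exact fun h => huv.ne (congrArg Subtype.val (Sum.inr_injective h)))

theorem Colorable.of_induce {s : Set V} [Fintype ↥sᶜ] {m : ℕ} (h : (G.induce s).Colorable m) :
    G.Colorable (m + Fintype.card ↥sᶜ) := by
  classical
  obtain ⟨C⟩ := h
  simpa using C.extendByCompl.colorable

end SimpleGraph

theorem chi_le_of_colorable {V : Type*} {G : SimpleGraph V} {k : ℕ} (h : G.Colorable k) :
    chi G ≤ k :=
  ENat.toNat_le_of_le_natCast h.chromaticNumber_le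

section

variable {V : Type*} [Fintype V]

theorem chi_le_chi_induce_add_card_compl (G : SimpleGraph V) (s : Finset V) :
    chi G ≤ chi (G.induce (s : Set V)) + (Fintype.card V - s.card) := by
  classical
  have h := (colorable_chromaticNumber_of_fintype (G.induce (s : Set V))).of_induce
  refine (chi_le_of_colorable h).trans_eq ?_
  rw [chi, Fintype.card_compl_set]
  simp

theorem disc_le_of_injective (G : SimpleGraph V) {c : V → ℕ} (hc : Function.Injective c)
    (s : Finset V) : disc G c s ≤ Fintype.card V - chi G := by
  have hchi := chi_le_chi_induce_add_card_compl G s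
  have hs := s.card_le_univ
  rw [disc, Finset.card_image_of_injective s hc]
  omega

theorem phiC_le_of_injective (G : SimpleGraph V) {c : V → ℕ} (hc : Function.Injective c) :
    phiC G c ≤ Fintype.card V - chi G :=
  Finset.sup_le fun s _ => disc_le_of_injective G hc s

theorem phi_le_phiC {G : SimpleGraph V} {c : V → ℕ} (hc : IsProper G c) : phi G ≤ phiC G c :=
  Nat.sInf_le ⟨c, hc, rfl⟩

end

theorem isProper_of_injective {V : Type*} (G : SimpleGraph V) {c : V → ℕ}
    (hc : Function.Injective c) : IsProper G c :=
  fun _ _ huv h => huv.ne (hc h)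

theorem stmt5 {V : Type*} [Fintype V] (G : SimpleGraph V) :
    phi G ≤ Fintype.card V - chi G := by
  have hc : Function.Injective fun v => (Fintype.equivFin V v : ℕ) :=
    Fin.val_injective.comp (Fintype.equivFin V).injective
  exact (phi_le_phiC (isProper_of_injective G hc)).trans (phiC_le_of_injective G hc)
end

section
/- For any connected graph G, φ(G) ≤ φ̂(G) + α(G) - 1, where α(G) is the independence number. -/
open SimpleGraph

/-!
Fix a proper colouring `c` attaining `φ̂(G)`. For `s` with `k` components in `G[s]` we build a
connected `t ⊇ s` with `χ(G[t]) ≤ χ(G[s]) + k - 1`; then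
`|c(s)| - χ(G[s]) ≤ |c(t)| - χ(G[t]) + k - 1 ≤ φ̂_c(G) + α(G) - 1`, since one vertex per component
of `G[s]` gives `k ≤ α(G)`.

`t` is reached by merging components one step at a time: split `s` into a union `B` of components
and the rest, and add to `s` a shortest path `P = y₀ … y_m` between `s \ B` and `B`. By minimality,
of the inner vertices of `P` only `y₁` has neighbours in `s \ B` and only `y_{m-1}` in `B`, so
`G[s ∪ P]` is glued at cut vertices from `G[(s \ B) + y₁]`, `G[B + y_{m-1}]` and the geodesic `P`,
which is bipartite. Hence `χ` grows by at most one while the number of components drops.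
-/

section

variable {V : Type*} {G : SimpleGraph V}

def IsColoringOn (G : SimpleGraph V) (s : Set V) (N : ℕ) (c : V → ℕ) : Prop :=
  (∀ x ∈ s, ∀ y ∈ s, G.Adj x y → c x ≠ c y) ∧ ∀ x ∈ s, c x < N

section Coloring

variable [Finite V]

theorem chi_induce_le_iff {s : Set V} {N : ℕ} :
    chi (G.induce s) ≤ N ↔ ∃ c, IsColoringOn G s N c := by
  classical
  constructor
  · intro h
    obtain ⟨C, hC⟩ := (colorable_iff_exists_bdd_nat_coloring N).1
      ((colorable_chromaticNumber_of_fintype (G.induce s)).mono h)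
    refine ⟨fun v => if hv : v ∈ s then C ⟨v, hv⟩ else 0, fun x hx y hy hxy => ?_, fun x hx => ?_⟩
    · simpa [hx, hy] using C.valid (show (G.induce s).Adj ⟨x, hx⟩ ⟨y, hy⟩ from hxy)
    · simpa [hx] using hC ⟨x, hx⟩
  · rintro ⟨c, hc, hcN⟩
    refine ENat.toNat_le_of_le_natCast (Colorable.chromaticNumber_le ?_)
    exact (colorable_iff_exists_bdd_nat_coloring N).2
      ⟨Coloring.mk (fun v => c v) fun {u v} h => hc _ u.2 _ v.2 h, fun v => hcN _ v.2⟩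

theorem chi_induce_mono {s t : Set V} (h : s ⊆ t) : chi (G.induce s) ≤ chi (G.induce t) := by
  obtain ⟨c, hc, hcN⟩ := chi_induce_le_iff.1 (le_refl (chi (G.induce t)))
  exact chi_induce_le_iff.2 ⟨c, fun x hx y hy => hc x (h hx) y (h hy), fun x hx => hcN x (h hx)⟩

theorem one_le_chi_induce {s : Set V} (hs : s.Nonempty) : 1 ≤ chi (G.induce s) := by
  by_contra! h
  obtain ⟨c, -, hcN⟩ := chi_induce_le_iff.1 (Nat.lt_one_iff.1 h).le
  obtain ⟨v, hv⟩ := hs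
  exact Nat.not_lt_zero _ (hcN v hv)

theorem chi_induce_insert_le (v : V) (s : Set V) :
    chi (G.induce (insert v s)) ≤ chi (G.induce s) + 1 := by
  classical
  obtain ⟨c, hc, hcN⟩ := chi_induce_le_iff.1 (le_refl (chi (G.induce s)))
  refine chi_induce_le_iff.2 ⟨fun x => if x = v then chi (G.induce s) else c x, ?_, ?_⟩
  · rintro x hx y hy hxy
    rcases eq_or_ne x v with rfl | hxv <;> rcases eq_or_ne y x with rfl | hyx
    · exact absurd hxy (G.loopless.irrefl _)
    · simpa [hyx.symm, (hcN y (hy.resolve_left hyx)).ne'] using hyx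
    · exact absurd hxy (G.loopless.irrefl _)
    · have hxs := hx.resolve_left hxv
      rcases eq_or_ne y v with rfl | hyv
      · simpa [hxv] using (hcN x hxs).ne
      · simpa [hxv, hyv] using hc x hxs y (hy.resolve_left hyv) hxy
  · rintro x hx
    rcases eq_or_ne x v with rfl | hxv
    · simp
    · simpa [hxv] using (hcN x (hx.resolve_left hxv)).trans (Nat.lt_succ_self _)

theorem chi_induce_union_le_max {X Y : Set V} {v : V} (hvX : v ∈ X) (hvY : v ∈ Y)
    (hcut : ∀ x ∈ X, ∀ y ∈ Y \ X, G.Adj x y → x = v) :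
    chi (G.induce (X ∪ Y)) ≤ max (chi (G.induce X)) (chi (G.induce Y)) := by
  classical
  set N := max (chi (G.induce X)) (chi (G.induce Y))
  obtain ⟨cX, hX, hXN⟩ := chi_induce_le_iff.1 (le_max_left _ _ : chi (G.induce X) ≤ N)
  obtain ⟨cY, hY, hYN⟩ := chi_induce_le_iff.1 (le_max_right _ _ : chi (G.induce Y) ≤ N)
  -- recolour `Y` so that both colourings agree at `v`
  set σ := Equiv.swap (cY v) (cX v)
  have hσ : σ (cY v) = cX v := Equiv.swap_apply_left _ _
  have hcross : ∀ x ∈ X, ∀ y ∈ Y \ X, G.Adj x y → cX x ≠ σ (cY y) := by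
    rintro x hx y hy hxy
    obtain rfl := hcut x hx y hy hxy
    rw [← hσ]
    exact σ.injective.ne (hY _ hvY y hy.1 hxy)
  refine chi_induce_le_iff.2 ⟨fun x => if x ∈ X then cX x else σ (cY x), ?_, ?_⟩
  · rintro x hx y hy hxy
    by_cases hxX : x ∈ X <;> by_cases hyX : y ∈ X <;> simp only [hxX, hyX, if_true, if_false]
    · exact hX x hxX y hyX hxy
    · exact hcross x hxX y ⟨hy.resolve_left hyX, hyX⟩ hxy
    · exact (hcross y hyX x ⟨hx.resolve_left hxX, hxX⟩ hxy.symm).symm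
    · exact σ.injective.ne (hY x (hx.resolve_left hxX) y (hy.resolve_left hyX) hxy)
  · rintro x hx
    by_cases hxX : x ∈ X
    · simp only [hxX, if_true]
      exact hXN x hxX
    · have hx' := hYN x (hx.resolve_left hxX)
      simp only [hxX, if_false, σ, Equiv.swap_apply_def]
      split_ifs
      · exact hXN v hvX
      · exact hYN v hvY
      · exact hx'

end Coloring

namespace SimpleGraph.Walk

variable {a b : V} (P : G.Walk a b)

theorem dist_start_getVert_le (i : ℕ) : G.dist a (P.getVert i) ≤ i :=
  (dist_le (P.take i)).trans (by simp)

theorem dist_getVert_end_le (i : ℕ) : G.dist (P.getVert i) b ≤ P.length - i :=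
  (dist_le (P.drop i)).trans_eq (by simp)

theorem dist_start_getVert_of_length_eq_dist (hP : P.length = G.dist a b) {i : ℕ}
    (hi : i ≤ P.length) : G.dist a (P.getVert i) = i := by
  have := (P.drop i).reachable.dist_triangle_right a
  have := P.dist_getVert_end_le i
  have := P.dist_start_getVert_le i
  omega

theorem chi_induce_support_le_two [Finite V] (hP : P.length = G.dist a b) :
    chi (G.induce {v | v ∈ P.support}) ≤ 2 := by
  refine chi_induce_le_iff.2 ⟨fun v => G.dist a v % 2, ?_, fun v _ => Nat.mod_lt _ two_pos⟩
  rintro x hx y hy hxy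
  obtain ⟨i, rfl, hi⟩ := mem_support_iff_exists_getVert.1 hx
  obtain ⟨j, rfl, hj⟩ := mem_support_iff_exists_getVert.1 hy
  have hij : i ≠ j := by rintro rfl; exact G.loopless.irrefl _ hxy
  have := hxy.diff_dist_adj (u := a)
  simp only [P.dist_start_getVert_of_length_eq_dist hP hi,
    P.dist_start_getVert_of_length_eq_dist hP hj] at this ⊢
  omega

end SimpleGraph.Walk

section Components

theorem exists_closed_of_not_connected_induce {s : Set V} (hs : s.Nonempty)
    (h : ¬ (G.induce s).Connected) :
    ∃ B ⊆ s, (∀ x ∈ s, ∀ z ∈ B, G.Adj x z → x ∈ B) ∧ (s \ B).Nonempty ∧ B.Nonempty := by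
  have : Nonempty s := hs.to_subtype
  obtain ⟨u, v, huv⟩ : ∃ u v : s, ¬ (G.induce s).Reachable u v := by
    simpa [connected_iff, Preconnected, this] using h
  refine ⟨{z | ∃ hz : z ∈ s, (G.induce s).Reachable ⟨z, hz⟩ v}, fun z hz => hz.1, ?_,
    ⟨u, u.2, fun hu => huv hu.2⟩, ⟨v, v.2, Reachable.refl _⟩⟩
  rintro x hx z ⟨hz, hzv⟩ hxz
  exact ⟨hx, (show (G.induce s).Adj ⟨x, hx⟩ ⟨z, hz⟩ from hxz).reachable.trans hzv⟩

theorem not_reachable_induce_of_closed {s B : Set V}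
    (hB : ∀ x ∈ s, ∀ z ∈ B, G.Adj x z → x ∈ B) {x z : s} (hx : x.1 ∉ B) (hz : z.1 ∈ B) :
    ¬ (G.induce s).Reachable x z := by
  rintro ⟨p⟩
  induction p with
  | nil => exact hx hz
  | cons hadj _ ih => exact hx (hB _ (Subtype.prop _) _ (by_contra fun h => ih h hz) hadj)

theorem card_connectedComponent_induce_lt [Finite V] {s t : Set V} (hst : s ⊆ t)
    (hcover : ∀ y : t, ∃ x : s, (G.induce t).Reachable (Set.inclusion hst x) y)
    {a b : s} (hab : ¬ (G.induce s).Reachable a b)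
    (hab' : (G.induce t).Reachable (Set.inclusion hst a) (Set.inclusion hst b)) :
    Nat.card (G.induce t).ConnectedComponent < Nat.card (G.induce s).ConnectedComponent := by
  set F := ConnectedComponent.map (G.induceHomOfLE hst).toHom
  have hsurj : Function.Surjective F := by
    refine ConnectedComponent.ind fun y => ?_
    obtain ⟨x, hx⟩ := hcover y
    exact ⟨G.induce s |>.connectedComponentMk x, ConnectedComponent.sound hx⟩
  have hninj : ¬ Function.Injective F := fun hinj =>
    hab (ConnectedComponent.exact (hinj (ConnectedComponent.sound hab')))
  exact (Nat.card_le_card_of_surjective F hsurj).lt_of_ne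
    fun h => hninj (hsurj.bijective_of_nat_card_le h.ge).1

end Components

section Merge

/- `B` is a union of components of `G[s]`, and `P` is a geodesic from `a ∈ s \ B` to `b ∈ B`
realising the distance between `s \ B` and `B`. -/
variable {s B : Set V} {a b : V} {P : G.Walk a b}

theorem mem_of_adj_getVert_of_two_le (hb : b ∈ B) (hP : P.length = G.dist a b)
    (hmin : ∀ x ∈ s \ B, ∀ z ∈ B, G.dist a b ≤ G.dist x z) {i : ℕ} (hi : 2 ≤ i)
    (hiP : i ≤ P.length) {z : V} (hz : z ∈ s) (hadj : G.Adj z (P.getVert i)) : z ∈ B := by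
  by_contra hzB
  have := hmin z ⟨hz, hzB⟩ b hb
  have := hadj.reachable.dist_triangle_left b
  have := P.dist_getVert_end_le i
  rw [dist_eq_one_iff_adj.2 hadj] at *
  omega

theorem not_adj_getVert_of_add_two_le (ha : a ∈ s \ B) (hP : P.length = G.dist a b)
    (hmin : ∀ x ∈ s \ B, ∀ z ∈ B, G.dist a b ≤ G.dist x z) {i : ℕ} (hi : i + 2 ≤ P.length)
    {z : V} (hz : z ∈ B) : ¬ G.Adj z (P.getVert i) := by
  intro hadj
  have := hmin a ha z hz
  have := hadj.symm.reachable.dist_triangle_right a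
  have := P.dist_start_getVert_le i
  rw [dist_eq_one_iff_adj.2 hadj.symm] at *
  omega

variable [Finite V]

theorem chi_induce_insert_union_support_le (hBs : B ⊆ s) (ha : a ∈ s \ B) (hb : b ∈ B)
    (hP : P.length = G.dist a b) (hmin : ∀ x ∈ s \ B, ∀ z ∈ B, G.dist a b ≤ G.dist x z) :
    chi (G.induce (insert (P.getVert (P.length - 1)) B ∪ {v | v ∈ P.support})) ≤
      chi (G.induce s) + 1 := by
  have hn := one_le_chi_induce (G := G) ⟨a, ha.1⟩
  refine (chi_induce_union_le_max (Y := {v | v ∈ P.support}) (Set.mem_insert _ _)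
    (P.getVert_mem_support _) ?_).trans
    (max_le ((chi_induce_insert_le _ _).trans (by grw [chi_induce_mono hBs]))
      ((P.chi_induce_support_le_two hP).trans (by omega)))
  rintro x (rfl | hxB) w ⟨hwS, hwX⟩ hadj
  · rfl
  obtain ⟨j, rfl, hj⟩ := Walk.mem_support_iff_exists_getVert.1 hwS
  have hjm : j ≠ P.length := by rintro rfl; exact hwX (Or.inr (by simpa using hb))
  have hjm' : j ≠ P.length - 1 := by rintro rfl; exact hwX (Or.inl rfl)
  exact absurd hadj (not_adj_getVert_of_add_two_le ha hP hmin (by omega) hxB)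

theorem chi_induce_union_support_le (hBs : B ⊆ s) (hB : ∀ x ∈ s, ∀ z ∈ B, G.Adj x z → x ∈ B)
    (ha : a ∈ s \ B) (hb : b ∈ B) (hP : P.length = G.dist a b)
    (hmin : ∀ x ∈ s \ B, ∀ z ∈ B, G.dist a b ≤ G.dist x z) :
    chi (G.induce (s ∪ {v | v ∈ P.support})) ≤ chi (G.induce s) + 1 := by
  set S := {v | v ∈ P.support}
  set y := P.getVert
  have hunion : s ∪ S = insert (y 1) (s \ B) ∪ (insert (y (P.length - 1)) B ∪ S) := by
    have h1 : y 1 ∈ S := P.getVert_mem_support 1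
    have h2 : y (P.length - 1) ∈ S := P.getVert_mem_support _
    ext v
    simp only [Set.mem_union, Set.mem_insert_iff, Set.mem_sdiff]
    constructor
    · rintro (hv | hv)
      · by_cases hvB : v ∈ B <;> tauto
      · tauto
    · rintro ((rfl | hv) | (rfl | hv) | hv)
      exacts [Or.inr h1, Or.inl hv.1, Or.inr h2, Or.inl (hBs hv), Or.inr hv]
  rw [hunion]
  refine (chi_induce_union_le_max (Y := insert (y (P.length - 1)) B ∪ S) (Set.mem_insert _ _)
    (Or.inr (P.getVert_mem_support 1)) ?_).trans
    (max_le ((chi_induce_insert_le _ _).trans (by grw [chi_induce_mono Set.sdiff_subset]))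
      (chi_induce_insert_union_support_le hBs ha hb hP hmin))
  rintro x (rfl | ⟨hxs, hxB⟩) w ⟨hwY, hwX⟩ hadj
  · rfl
  have hwS : w ∈ S := by
    rcases hwY with (rfl | hwB) | hwS
    · exact P.getVert_mem_support _
    · exact absurd (hB x hxs w hwB hadj) hxB
    · exact hwS
  obtain ⟨j, rfl, hj⟩ := Walk.mem_support_iff_exists_getVert.1 hwS
  have hj0 : j ≠ 0 := by rintro rfl; exact hwX (Or.inr (by simpa [y] using ha))
  have hj1 : j ≠ 1 := by rintro rfl; exact hwX (Or.inl rfl)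
  exact absurd (mem_of_adj_getVert_of_two_le hb hP hmin (by omega) hj hxs hadj) hxB

theorem card_connectedComponent_induce_union_support_lt (hBs : B ⊆ s)
    (hB : ∀ x ∈ s, ∀ z ∈ B, G.Adj x z → x ∈ B) (ha : a ∈ s \ B) (hb : b ∈ B) :
    Nat.card (G.induce (s ∪ {v | v ∈ P.support})).ConnectedComponent <
      Nat.card (G.induce s).ConnectedComponent := by
  have hreach : ∀ {v w} (hv : v ∈ P.support) (hw : w ∈ P.support),
      (G.induce (s ∪ {v | v ∈ P.support})).Reachable ⟨v, Or.inr hv⟩ ⟨w, Or.inr hw⟩ :=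
    fun hv hw => (P.connected_induce_support.preconnected ⟨_, hv⟩ ⟨_, hw⟩).map
      (G.induceHomOfLE Set.subset_union_right).toHom
  refine card_connectedComponent_induce_lt Set.subset_union_left (fun ⟨y, hy⟩ => ?_)
    (a := ⟨a, ha.1⟩) (b := ⟨b, hBs hb⟩) (not_reachable_induce_of_closed hB ha.2 hb)
    (hreach P.start_mem_support P.end_mem_support)
  rcases hy with hys | hyP
  · exact ⟨⟨y, hys⟩, Reachable.refl _⟩
  · exact ⟨⟨a, ha.1⟩, hreach P.start_mem_support hyP⟩

end Merge

section Superset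

variable [Finite V]

theorem exists_superset_chi_le_succ_card_lt (hG : G.Connected) {s : Set V} (hs : s.Nonempty)
    (h : ¬ (G.induce s).Connected) :
    ∃ t, s ⊆ t ∧ chi (G.induce t) ≤ chi (G.induce s) + 1 ∧
      Nat.card (G.induce t).ConnectedComponent < Nat.card (G.induce s).ConnectedComponent := by
  obtain ⟨B, hBs, hB, hsB, hBne⟩ := exists_closed_of_not_connected_induce hs h
  obtain ⟨⟨a, b⟩, ⟨ha, hb⟩, hmin⟩ := Set.exists_min_image ((s \ B) ×ˢ B)
    (fun p => G.dist p.1 p.2) (Set.toFinite _) (hsB.prod hBne)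
  obtain ⟨P, hP⟩ := hG.exists_walk_length_eq_dist a b
  exact ⟨_, Set.subset_union_left,
    chi_induce_union_support_le hBs hB ha hb hP fun x hx z hz => hmin (x, z) ⟨hx, hz⟩,
    card_connectedComponent_induce_union_support_lt (P := P) hBs hB ha hb⟩

theorem exists_connected_superset (hG : G.Connected) {s : Set V} (hs : s.Nonempty) :
    ∃ t, s ⊆ t ∧ (G.induce t).Connected ∧
      chi (G.induce t) + 1 ≤ chi (G.induce s) + Nat.card (G.induce s).ConnectedComponent := by
  induction hk : Nat.card (G.induce s).ConnectedComponent using Nat.strong_induction_on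
    generalizing s with
  | _ k ih =>
    by_cases hc : (G.induce s).Connected
    · have : Nonempty (G.induce s).ConnectedComponent := hc.nonempty.map (connectedComponentMk _)
      have := Nat.card_pos (α := (G.induce s).ConnectedComponent)
      exact ⟨s, subset_rfl, hc, by omega⟩
    · obtain ⟨t, hst, hχ, hlt⟩ := exists_superset_chi_le_succ_card_lt hG hs hc
      obtain ⟨u, htu, hu, hχu⟩ := ih _ (hk ▸ hlt) (hs.mono hst) rfl
      exact ⟨u, hst.trans htu, hu, by omega⟩

end Superset

section Fintype

variable [Fintype V]

theorem le_indepNum' {R : Finset V} (hR : ∀ u ∈ R, ∀ v ∈ R, ¬ G.Adj u v) :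
    R.card ≤ indepNum' G := by
  unfold indepNum'
  refine le_trans ?_ (Finset.le_sup (Finset.mem_univ R))
  rw [if_pos hR]

theorem card_connectedComponent_induce_le_indepNum' (s : Set V) :
    Nat.card (G.induce s).ConnectedComponent ≤ indepNum' G := by
  classical
  have := Fintype.ofFinite (G.induce s).ConnectedComponent
  set rep : (G.induce s).ConnectedComponent → V := fun C => C.out.1
  have hrep : Function.Injective rep := fun C D h => by
    rw [← C.out_eq, ← D.out_eq, Subtype.ext h]
  refine (Nat.card_eq_fintype_card.trans ?_).trans_le (le_indepNum' (R := Finset.univ.image rep) ?_)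
  · rw [Finset.card_image_of_injective _ hrep, Finset.card_univ]
  simp only [Finset.mem_image, Finset.mem_univ, true_and]
  rintro _ ⟨C, rfl⟩ _ ⟨D, rfl⟩ hCD
  obtain rfl : C = D := by
    rw [← C.out_eq, ← D.out_eq]
    exact ConnectedComponent.sound (show (G.induce s).Adj C.out D.out from hCD).reachable
  exact G.loopless.irrefl _ hCD

theorem disc_le_phiHatC (c : V → ℕ) {s : Finset V} (hs : (G.induce (s : Set V)).Connected) :
    disc G c s ≤ phiHatC G c := by
  unfold phiHatC
  refine le_trans ?_ (Finset.le_sup (Finset.mem_univ s))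
  rw [if_pos hs]

theorem disc_le_phiHatC_add_indepNum' (hG : G.Connected) (c : V → ℕ) (s : Finset V) :
    disc G c s ≤ phiHatC G c + indepNum' G - 1 := by
  classical
  rcases s.eq_empty_or_nonempty with rfl | hs
  · simp [disc]
  obtain ⟨t, hst, ht, hχ⟩ := exists_connected_superset hG (s := (s : Set V)) hs
  have himage : (s.image c).card ≤ (t.toFinset.image c).card :=
    Finset.card_le_card (Finset.image_subset_image (by simpa using hst))
  have hφ := disc_le_phiHatC (G := G) c (s := t.toFinset) (by rwa [Set.coe_toFinset])
  have hk := card_connectedComponent_induce_le_indepNum' (G := G) (s : Set V)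
  unfold disc at hφ ⊢
  rw [Set.coe_toFinset] at hφ
  omega

end Fintype

end

theorem stmt18 {V : Type*} [Fintype V] (G : SimpleGraph V) (hconn : G.Connected) :
    phi G ≤ phiHat G + indepNum' G - 1 := by
  obtain ⟨c, hc, hcφ⟩ : ∃ c, IsProper G c ∧ phiHatC G c = phiHat G :=
    Nat.sInf_mem (s := {n | ∃ c, IsProper G c ∧ phiHatC G c = n}) ⟨_, fun v => Fintype.equivFin V v,
      fun u v huv h => huv.ne ((Fintype.equivFin V).injective (Fin.val_injective h)), rfl⟩
  calc phi G ≤ phiC G c := Nat.sInf_le ⟨c, hc, rfl⟩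
    _ ≤ phiHatC G c + indepNum' G - 1 :=
      Finset.sup_le fun s _ => disc_le_phiHatC_add_indepNum' hconn c s
    _ = phiHat G + indepNum' G - 1 := by rw [hcφ]
end
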